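/- Let k ≥ 2 be an integer. For every integer j with 2k ≤ j ≤ 2k+2, the number of cyclic binary strings of length j all of whose blocks have length at least k equals 2 + j(j − 2k + 1), i.e., a_k(j) = 2 + j(j−2k+1). -/
import Mathlib


open SimpleGraph

/-- `N[S]`: the union of closed neighbourhoods of the vertices of `S`. -/
def closedNbhd {V : Type*} (G : SimpleGraph V) (S : Set V) : Set V :=
  ⋃ v ∈ S, insert v (G.neighborSet v)

/-- A set `S` is digitally convex in `G` if every vertex `v` with `N[v] ⊆ N[S]`
belongs to `S`. -/
def DigConvex {V : Type*} (G : SimpleGraph V) (S : Set V) : Prop :=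
  ∀ v : V, insert v (G.neighborSet v) ⊆ closedNbhd G S → v ∈ S

/-- `n_D(G)`: the number of digitally convex sets of `G`. -/
noncomputable def nD {V : Type*} (G : SimpleGraph V) : ℕ :=
  Nat.card {S : Set V // DigConvex G S}

/-- A cyclic binary string `s : ZMod n → {0,1}` has all (maximal cyclic) blocks of
length at least `k`: whenever `s i ≠ s (i+1)`, the `k` bits starting at `i+1` all
equal `s (i+1)`. -/
def BlocksAtLeast {n : ℕ} (k : ℕ) (s : ZMod n → Fin 2) : Prop :=
  ∀ i : ZMod n, s i ≠ s (i + 1) → ∀ t : ℕ, 1 ≤ t → t ≤ k → s (i + (t : ZMod n)) = s (i + 1)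

/-- `a k n = |B_{k,n}|`: the number of cyclic binary strings of length `n` all of
whose blocks have length at least `k`. -/
noncomputable def numCyclicStrings (k n : ℕ) : ℕ :=
  Nat.card {s : ZMod n → Fin 2 // BlocksAtLeast k s}

namespace CyclicStringsAux

set_option linter.unusedSectionVars false

lemma fin2 (x : Fin 2) : x = 0 ∨ x = 1 := by omega

section
variable {j : ℕ} [NeZero j]

lemma zmod_repr (c i : ZMod j) : i = c + (((i - c).val : ℕ) : ZMod j) := by
  rw [ZMod.natCast_val, ZMod.cast_id]; ring

lemma val_shift (c : ZMod j) {w : ℕ} (hw : w < j) : ((c + (w : ZMod j)) - c).val = w := by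
  rw [add_sub_cancel_left, ZMod.val_cast_of_lt hw]

/-- The string with a single `1`-block occupying positions `c+1, …, c+k+d`. -/
def ivString (k : ℕ) {j : ℕ} (c : ZMod j) (d : ℕ) : ZMod j → Fin 2 :=
  fun i => if 1 ≤ (i - c).val ∧ (i - c).val ≤ k + d then 1 else 0

lemma ivString_apply (k : ℕ) (c : ZMod j) (d : ℕ) {w : ℕ} (hw : w < j) :
    ivString k c d (c + (w : ZMod j)) = if 1 ≤ w ∧ w ≤ k + d then 1 else 0 := by
  unfold ivString; rw [val_shift c hw]

lemma cast_add_one (c : ZMod j) (u : ℕ) :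
    c + (u : ZMod j) + 1 = c + ((u + 1 : ℕ) : ZMod j) := by push_cast; ring

lemma cast_add_add (c : ZMod j) (u v : ℕ) :
    c + (u : ZMod j) + (v : ZMod j) = c + ((u + v : ℕ) : ZMod j) := by push_cast; ring

lemma cast_eq_zero_of_eq (c : ZMod j) {u : ℕ} (h : u = j) :
    c + (u : ZMod j) = c + ((0 : ℕ) : ZMod j) := by
  rw [h]; simp [ZMod.natCast_self]

lemma ivString_blocks {k d : ℕ} (hk : 2 ≤ k) (hj : 2 * k ≤ j) (hd : k + d ≤ j - k)
    (c : ZMod j) : BlocksAtLeast k (ivString k c d) := by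
  have hj0 : 0 < j := Nat.pos_of_ne_zero (NeZero.ne j)
  set m := k + d with hm
  intro i hne t ht1 htk
  set w := (i - c).val with hwdef
  have hw : w < j := ZMod.val_lt _
  have hi : i = c + (w : ZMod j) := zmod_repr c i
  have hval : ∀ u : ℕ, u < j →
      ivString k c d (c + (u : ZMod j)) = if 1 ≤ u ∧ u ≤ m then 1 else 0 :=
    fun u hu => ivString_apply k c d hu
  have hw0m : w = 0 ∨ w = m := by
    by_contra hcon
    push_neg at hcon
    apply hne
    by_cases hlt : w + 1 < j
    · conv_lhs => rw [hi]
      conv_rhs => rw [hi, cast_add_one c w]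
      rw [hval w hw, hval _ hlt]
      split_ifs <;> first | rfl | omega
    · have hwj : w + 1 = j := by omega
      conv_lhs => rw [hi]
      conv_rhs => rw [hi, cast_add_one c w, cast_eq_zero_of_eq c hwj]
      rw [hval w hw, hval 0 hj0]
      split_ifs <;> first | rfl | omega
  rcases hw0m with h0 | h0
  · -- i = c
    have hic : i = c := by rw [hi, h0]; simp
    have e1 : i + (t : ZMod j) = c + (t : ZMod j) := by rw [hic]
    have e2 : i + 1 = c + ((0 + 1 : ℕ) : ZMod j) := by
      rw [hic]; push_cast; ring
    rw [e1, e2, hval t (by omega), hval (0 + 1) (by omega)]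
    split_ifs <;> first | rfl | omega
  · -- i = c + m
    have hi' : i = c + (m : ZMod j) := by rw [hi, h0]
    have e2 : i + 1 = c + ((m + 1 : ℕ) : ZMod j) := by rw [hi', cast_add_one]
    have e1 : i + (t : ZMod j) = c + ((m + t : ℕ) : ZMod j) := by rw [hi', cast_add_add]
    rw [e1, e2, hval (m + 1) (by omega)]
    by_cases hmt : m + t < j
    · rw [hval (m + t) hmt]
      split_ifs <;> first | rfl | omega
    · have : m + t = j := by omega
      rw [cast_eq_zero_of_eq c this, hval 0 hj0]
      split_ifs <;> first | rfl | omega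

lemma exists_iv {k : ℕ} {s : ZMod j → Fin 2} (hk : 2 ≤ k) (hj1 : 2 * k ≤ j)
    (hj2 : j ≤ 2 * k + 2) (hs : BlocksAtLeast k s) {c : ZMod j}
    (hc0 : s c = 0) (hc1 : s (c + 1) = 1) :
    ∃ d : ℕ, d ≤ j - 2 * k ∧ s = ivString k c d := by
  classical
  have hj0 : 0 < j := Nat.pos_of_ne_zero (NeZero.ne j)
  set g : ℕ → Fin 2 := fun t => s (c + (t : ZMod j)) with hg
  have hg0 : g 0 = 0 := by
    show s (c + ((0 : ℕ) : ZMod j)) = 0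
    simpa using hc0
  have hgc1 : s (c + 1) = g 1 := by
    show _ = s (c + ((1 : ℕ) : ZMod j)); norm_num
  have hg1 : ∀ t, 1 ≤ t → t ≤ k → g t = 1 := by
    intro t h1 h2
    have hne : s c ≠ s (c + 1) := by rw [hc0, hc1]; decide
    have := hs c hne t h1 h2
    rw [hc1] at this; exact this
  have hgj : g j = 0 := by
    show s (c + ((j : ℕ) : ZMod j)) = 0
    simpa [ZMod.natCast_self] using hc0
  set P : ℕ → Prop := fun t => ∀ u, 1 ≤ u → u ≤ t → g u = 1 with hP
  set m := Nat.findGreatest P j with hmdef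
  have hPk : P k := fun u h1 h2 => hg1 u h1 h2
  have hkm : k ≤ m := Nat.le_findGreatest (by omega) hPk
  have hmj : m ≤ j := Nat.findGreatest_le j
  have hPm : P m := Nat.findGreatest_spec (show k ≤ j by omega) hPk
  have hmlt : m < j := by
    rcases lt_or_eq_of_le hmj with h | h
    · exact h
    · exfalso
      have := hPm j (by omega) (by omega)
      rw [hgj] at this; exact absurd this (by decide)
  have hgm1 : g (m + 1) = 0 := by
    have hnP : ¬ P (m + 1) := by
      apply Nat.findGreatest_is_greatest (n := j) _ (by omega)
      omega
    rcases fin2 (g (m + 1)) with h | h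
    · exact h
    · exfalso; apply hnP; intro u h1 h2
      rcases Nat.lt_or_ge u (m + 1) with h' | h'
      · exact hPm u h1 (by omega)
      · rw [show u = m + 1 by omega]; exact h
  have hbm : s (c + (m : ZMod j)) ≠ s (c + (m : ZMod j) + 1) := by
    have e1 : s (c + (m : ZMod j)) = 1 := hPm m (by omega) le_rfl
    have e2 : s (c + (m : ZMod j) + 1) = g (m + 1) := by
      show _ = s _; rw [cast_add_one]
    rw [e1, e2, hgm1]; decide
  have hbd : ∀ t, 1 ≤ t → t ≤ k → g (m + t) = 0 := by
    intro t h1 h2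
    have h := hs (c + (m : ZMod j)) hbm t h1 h2
    rw [cast_add_add, cast_add_one] at h
    calc g (m + t) = s (c + ((m + t : ℕ) : ZMod j)) := rfl
      _ = s (c + ((m + 1 : ℕ) : ZMod j)) := h
      _ = 0 := hgm1
  have hperiod : ∀ u : ℕ, g (u + j) = g u := by
    intro u
    show s _ = s _
    congr 1
    push_cast [ZMod.natCast_self]
    ring
  have hmkj : m + k ≤ j := by
    by_contra hcon
    push_neg at hcon
    have h1 : g (m + k) = 0 := hbd k (by omega) le_rfl
    have h2 : g (m + k) = 1 := by
      rw [show m + k = (m + k - j) + j by omega, hperiod]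
      exact hPm (m + k - j) (by omega) (by omega)
    rw [h1] at h2; exact absurd h2 (by decide)
  have hhi : ∀ u, m < u → u ≤ j → g u = 0 := by
    intro u h1 h2
    rcases le_or_gt u (m + k) with h | h
    · have := hbd (u - m) (by omega) (by omega)
      rwa [show m + (u - m) = u by omega] at this
    · rcases Nat.eq_or_lt_of_le h2 with h' | h'
      · rw [h']; exact hgj
      · -- forces m = k, j = 2k+2, u = j-1 = m+k+1
        have humk : u = m + k + 1 := by omega
        have hjmk : j = m + k + 2 := by omega
        by_contra hne0
        have hg1u : g u = 1 := by
          rcases fin2 (g u) with h'' | h''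
          · exact absurd h'' hne0
          · exact h''
        have e0 : s (c + ((m + k : ℕ) : ZMod j)) = 0 := hbd k (by omega) le_rfl
        have hne2 : s (c + ((m + k : ℕ) : ZMod j)) ≠ s (c + ((m + k : ℕ) : ZMod j) + 1) := by
          have eB : s (c + ((m + k : ℕ) : ZMod j) + 1) = g (m + k + 1) := by
            show _ = s _; rw [cast_add_one]
          rw [e0, eB, ← humk, hg1u]; decide
        have h2' := hs _ hne2 2 (by omega) (by omega)
        have eC : c + ((m + k : ℕ) : ZMod j) + ((2 : ℕ) : ZMod j)
            = c + ((m + k + 2 : ℕ) : ZMod j) := cast_add_add c (m + k) 2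
        have eD : c + ((m + k : ℕ) : ZMod j) + 1 = c + ((m + k + 1 : ℕ) : ZMod j) :=
          cast_add_one c (m + k)
        rw [eC, eD] at h2'
        have h2'' : g (m + k + 2) = g (m + k + 1) := h2'
        rw [← hjmk, hgj, ← humk, hg1u] at h2''
        exact absurd h2'' (by decide)
  refine ⟨m - k, by omega, ?_⟩
  funext i
  have hw : (i - c).val < j := ZMod.val_lt _
  have hi : i = c + (((i - c).val : ℕ) : ZMod j) := zmod_repr c i
  set w := (i - c).val with hwdef
  have hiv : ivString k c (m - k) i = if 1 ≤ w ∧ w ≤ k + (m - k) then 1 else 0 := by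
    conv_lhs => rw [hi]
    exact ivString_apply k c (m - k) hw
  have hsi : s i = g w := by conv_lhs => rw [hi]
  rw [hiv, show k + (m - k) = m by omega, hsi]
  rcases Nat.eq_zero_or_pos w with h0 | h0
  · rw [h0, hg0, if_neg (by omega)]
  · rcases le_or_gt w m with h | h
    · rw [hPm w h0 h, if_pos ⟨h0, h⟩]
    · rw [hhi w h (by omega), if_neg (by omega)]

lemma exists_boundary {s : ZMod j → Fin 2} :
    ∀ n : ℕ, ∀ a : ZMod j, s a = 0 → s (a + (n : ZMod j)) = 1 →
      ∃ c : ZMod j, s c = 0 ∧ s (c + 1) = 1 := by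
  intro n
  induction n with
  | zero =>
    intro a h0 h1
    rw [Nat.cast_zero, add_zero, h0] at h1
    exact absurd h1 (by decide)
  | succ n ih =>
    intro a h0 h1
    rcases fin2 (s (a + (n : ZMod j))) with h | h
    · refine ⟨a + (n : ZMod j), h, ?_⟩
      rw [cast_add_one]; exact h1
    · exact ih a h0 h

/-- The parametrisation of all valid strings. -/
def F (k j : ℕ) (x : Fin 2 ⊕ ZMod j × Fin (j - 2 * k + 1)) : ZMod j → Fin 2 :=
  Sum.elim (fun b _ => b) (fun p => ivString k p.1 p.2.val) x

lemma range_eq {k : ℕ} (hk : 2 ≤ k) (hj1 : 2 * k ≤ j) (hj2 : j ≤ 2 * k + 2) :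
    {s : ZMod j → Fin 2 | BlocksAtLeast k s} = Set.range (F k j) := by
  ext s
  constructor
  · intro hs
    by_cases hconst : ∀ i, s i = s 0
    · exact ⟨.inl (s 0), funext fun i => (hconst i).symm⟩
    · push_neg at hconst
      obtain ⟨b, hb⟩ := hconst
      have hex : ∃ c : ZMod j, s c = 0 ∧ s (c + 1) = 1 := by
        rcases fin2 (s 0) with h0 | h0
        · have hb1 : s b = 1 := by
            rcases fin2 (s b) with h | h
            · exact absurd (h.trans h0.symm) hb
            · exact h
          exact exists_boundary ((b - 0).val) 0 h0 (by rw [← zmod_repr 0 b]; exact hb1)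
        · have hb0 : s b = 0 := by
            rcases fin2 (s b) with h | h
            · exact h
            · exact absurd (h.trans h0.symm) hb
          exact exists_boundary ((0 - b).val) b hb0 (by rw [← zmod_repr b 0]; exact h0)
      obtain ⟨c, hc0, hc1⟩ := hex
      obtain ⟨d, hd, hsd⟩ := exists_iv hk hj1 hj2 hs hc0 hc1
      exact ⟨.inr (c, ⟨d, by omega⟩), hsd.symm⟩
  · rintro ⟨x, rfl⟩
    match x with
    | .inl b =>
      intro i hne
      exact absurd rfl hne
    | .inr ⟨c, d⟩ =>
      have := d.isLt
      exact ivString_blocks hk hj1 (by omega) c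

lemma iv_at_c {k d : ℕ} (c : ZMod j) (hj0 : 0 < j) : ivString k c d c = 0 := by
  have : ivString k c d (c + ((0 : ℕ) : ZMod j)) = _ := ivString_apply k c d hj0
  simpa using this.trans (if_neg (by omega))

lemma iv_at_c1 {k d : ℕ} (hk : 1 ≤ k) (c : ZMod j) (hj : 1 < j) :
    ivString k c d (c + 1) = 1 := by
  have h := ivString_apply k c d (w := 1) hj
  rw [Nat.cast_one] at h
  exact h.trans (if_pos ⟨le_rfl, by omega⟩)

lemma iv_start {k d : ℕ} (hk : 2 ≤ k) (hj1 : 2 * k ≤ j) (hd : k + d ≤ j - k)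
    {c i : ZMod j} (h0 : ivString k c d i = 0) (h1 : ivString k c d (i + 1) = 1) :
    i = c := by
  have hj0 : 0 < j := by omega
  have hw : (i - c).val < j := ZMod.val_lt _
  have hi : i = c + (((i - c).val : ℕ) : ZMod j) := zmod_repr c i
  set w := (i - c).val with hwdef
  have hcond : ¬(1 ≤ w ∧ w ≤ k + d) := by
    intro hcon
    rw [hi, ivString_apply k c d hw, if_pos hcon] at h0
    exact absurd h0 (by decide)
  have hw0 : w = 0 := by
    by_contra hne
    -- then k + d < w < j
    have hgt : k + d < w := by omega
    by_cases hlt : w + 1 < j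
    · rw [hi, cast_add_one, ivString_apply k c d hlt, if_neg (by omega)] at h1
      exact absurd h1 (by decide)
    · rw [hi, cast_add_one, cast_eq_zero_of_eq c (show w + 1 = j by omega),
        ivString_apply k c d hj0, if_neg (by omega)] at h1
      exact absurd h1 (by decide)
  rw [hi, hw0]; simp

lemma iv_inj {k d d' : ℕ} (hk : 2 ≤ k) (hj1 : 2 * k ≤ j) (hd : k + d ≤ j - k)
    (hd' : k + d' ≤ j - k) {c : ZMod j}
    (h : ivString k c d = ivString (j := j) k c d') : d = d' := by
  have key : ∀ d1 d2 : ℕ, k + d1 ≤ j - k → k + d2 ≤ j - k →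
      ivString (j := j) k c d1 = ivString (j := j) k c d2 → d1 ≤ d2 := by
    intro d1 d2 hd1 hd2 hh
    by_contra hlt
    push_neg at hlt
    have hwlt : k + d1 < j := by omega
    have e1 : ivString (j := j) k c d1 (c + ((k + d1 : ℕ) : ZMod j)) = 1 := by
      rw [ivString_apply k c d1 hwlt]; exact if_pos ⟨by omega, le_rfl⟩
    have e2 : ivString (j := j) k c d2 (c + ((k + d1 : ℕ) : ZMod j)) = 0 := by
      rw [ivString_apply k c d2 hwlt]; exact if_neg (by omega)
    rw [hh, e2] at e1
    exact absurd e1 (by decide)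
  exact le_antisymm (key d d' hd hd' h) (key d' d hd' hd h.symm)

lemma F_inj {k : ℕ} (hk : 2 ≤ k) (hj1 : 2 * k ≤ j) : Function.Injective (F k j) := by
  have hj0 : 0 < j := by omega
  have hj2 : 1 < j := by omega
  intro x y h
  match x, y with
  | .inl b, .inl b' =>
    have := congrFun h (0 : ZMod j)
    simp only [F, Sum.elim_inl] at this
    rw [this]
  | .inl b, .inr ⟨c, d⟩ =>
    exfalso
    have h1 := congrFun h c
    have h2 := congrFun h (c + 1)
    simp only [F, Sum.elim_inl, Sum.elim_inr] at h1 h2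
    rw [iv_at_c c hj0] at h1
    rw [iv_at_c1 (by omega) c hj2] at h2
    rw [h1] at h2
    exact absurd h2 (by decide)
  | .inr ⟨c, d⟩, .inl b =>
    exfalso
    have h1 := congrFun h c
    have h2 := congrFun h (c + 1)
    simp only [F, Sum.elim_inl, Sum.elim_inr] at h1 h2
    rw [iv_at_c c hj0] at h1
    rw [iv_at_c1 (by omega) c hj2] at h2
    rw [← h1] at h2
    exact absurd h2 (by decide)
  | .inr ⟨c, d⟩, .inr ⟨c', d'⟩ =>
    simp only [F, Sum.elim_inr] at h
    have hdlt := d.isLt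
    have hd'lt := d'.isLt
    have hd : k + d.val ≤ j - k := by omega
    have hd' : k + d'.val ≤ j - k := by omega
    have hcc : c = c' := by
      apply iv_start hk hj1 hd'
      · rw [← h]; exact iv_at_c c hj0
      · rw [← h]; exact iv_at_c1 (by omega) c hj2
    subst hcc
    have : d.val = d'.val := iv_inj hk hj1 hd hd' h
    rw [Sum.inr.injEq, Prod.mk.injEq]
    exact ⟨rfl, Fin.ext this⟩

end

end CyclicStringsAux

/-- For `k ≥ 2` and `2k ≤ j ≤ 2k+2`, `a_k(j) = 2 + j(j - 2k + 1)`. -/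
theorem cyclic_strings_medium (k : ℕ) (hk : 2 ≤ k) :
    ∀ j : ℕ, 2 * k ≤ j → j ≤ 2 * k + 2 →
      numCyclicStrings k j = 2 + j * (j - 2 * k + 1) := by
  intro j hj1 hj2
  haveI : NeZero j := ⟨by omega⟩
  have hrange := CyclicStringsAux.range_eq (j := j) hk hj1 hj2
  have hinj := CyclicStringsAux.F_inj (j := j) hk hj1
  have e1 : Nat.card {s : ZMod j → Fin 2 // BlocksAtLeast k s}
      = Nat.card (Set.range (CyclicStringsAux.F k j)) :=
    Nat.card_congr (Equiv.setCongr hrange)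
  rw [numCyclicStrings, e1, Nat.card_range_of_injective hinj, Nat.card_sum,
    Nat.card_prod, Nat.card_zmod]
  simp [Nat.card_eq_fintype_card]
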